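/- arXiv:2102.01965 — 2 statements merged into one kernel-verified Lean document; each statement's English description precedes it below -/
import Mathlib

section
/- Let Λ, Γ be g-fusion Bessel sequences in H with bounds D₁, D₂ and frame operator S_{ΓΛ}. Then S_{ΓΛ} is bounded below if and only if there exists K ∈ B(H) such that {T_j}_{j∈J} with T_j = v_j w_j K P_{V_j} Γ_j* Λ_j P_{W_j} is a resolution of the identity operator on H. -/
/-!
Both sides say that `S` has a bounded left inverse. Applying a bounded `K` termwise to the
series defining `S f` gives a series with sum `K (S f)`, so the family `K ∘ (j-th term)` is a
resolution of the identity exactly when `K ∘ S = 1`. An operator with a bounded left inverse is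
bounded below; conversely, if `S` is bounded below it is an isomorphism onto its closed range,
and composing the inverse with the orthogonal projection onto that range gives a left inverse.
-/

open ContinuousLinearMap

noncomputable def proj {E : Type*} [NormedAddCommGroup E] [InnerProductSpace ℂ E]
    (W : Submodule ℂ E) [CompleteSpace W] : E →L[ℂ] E :=
  W.subtypeL.comp (W.orthogonalProjectionOnto)

namespace ContinuousLinearMap

variable {𝕜 E F : Type*} [RCLike 𝕜] [NormedAddCommGroup E] [NormedSpace 𝕜 E]
  [NormedAddCommGroup F]

theorem exists_pos_mul_norm_le_iff_antilipschitz [NormedSpace 𝕜 F] (S : E →L[𝕜] F) :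
    (∃ M > (0 : ℝ), ∀ x, M * ‖x‖ ≤ ‖S x‖) ↔ ∃ c, AntilipschitzWith c S := by
  constructor
  · rintro ⟨M, hM, hS⟩
    refine ⟨M⁻¹.toNNReal, S.antilipschitz_of_bound fun x => ?_⟩
    rw [Real.coe_toNNReal _ (inv_nonneg.2 hM.le), inv_mul_eq_div, le_div_iff₀ hM, mul_comm]
    exact hS x
  · rintro ⟨c, hc⟩
    refine ⟨(c + 1 : ℝ)⁻¹, by positivity, fun x => ?_⟩
    rw [inv_mul_le_iff₀ (by positivity)]
    calc ‖x‖ ≤ c * ‖S x‖ := S.bound_of_antilipschitz hc x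
      _ ≤ (c + 1) * ‖S x‖ := by gcongr; linarith

theorem exists_leftInverse_iff_antilipschitz [CompleteSpace E] [InnerProductSpace 𝕜 F]
    [CompleteSpace F] (S : E →L[𝕜] F) :
    (∃ K : F →L[𝕜] E, Function.LeftInverse K S) ↔ ∃ c, AntilipschitzWith c S := by
  constructor
  · rintro ⟨K, hK⟩
    exact ⟨_, K.lipschitz.to_rightInverse hK⟩
  · rintro ⟨c, hc⟩
    have : CompleteSpace S.range := hc.completeSpace_range_clm
    let e := S.equivRange hc.injective (hc.isClosed_range S.uniformContinuous)
    refine ⟨e.symm.toContinuousLinearMap.comp S.range.orthogonalProjectionOnto, fun x => ?_⟩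
    simp [e, S.range.orthogonalProjectionOnto_mem_subspace_eq_self ⟨S x, S.mem_range_self x⟩]

end ContinuousLinearMap

theorem forall_hasSum_map_iff_leftInverse {ι R E F : Type*} [Semiring R]
    [AddCommMonoid E] [Module R E] [TopologicalSpace E]
    [AddCommMonoid F] [Module R F] [TopologicalSpace F] [T2Space E]
    {u : E → ι → F} {S : E → F} (hS : ∀ x, HasSum (u x) (S x)) (K : F →L[R] E) :
    (∀ x, HasSum (fun j => K (u x j)) x) ↔ Function.LeftInverse K S :=
  ⟨fun hK x => ((hS x).mapL K).unique (hK x),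
    fun hK x => by simpa only [hK x] using (hS x).mapL K⟩

theorem stmt10_general
    {ι E : Type*} [NormedAddCommGroup E] [InnerProductSpace ℂ E] [CompleteSpace E]
    {G : ι → Type*} [∀ j, NormedAddCommGroup (G j)] [∀ j, InnerProductSpace ℂ (G j)]
    [∀ j, CompleteSpace (G j)]
    (W V' : ι → Submodule ℂ E) [∀ j, CompleteSpace (W j)] [∀ j, CompleteSpace (V' j)]
    (w v : ι → ℝ)
    (Λ Γ : ∀ j, E →L[ℂ] G j)
    (S : E →L[ℂ] E)
    (hS : ∀ f : E, HasSum
      (fun j => (v j * w j) • proj (V' j)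
        (ContinuousLinearMap.adjoint (Γ j) (Λ j (proj (W j) f)))) (S f)) :
    (∃ M > (0 : ℝ), ∀ f : E, M * ‖f‖ ≤ ‖S f‖) ↔
    ∃ K : E →L[ℂ] E, ∀ f : E, HasSum
      (fun j => (v j * w j) • K (proj (V' j)
        (ContinuousLinearMap.adjoint (Γ j) (Λ j (proj (W j) f))))) f := by
  rw [S.exists_pos_mul_norm_le_iff_antilipschitz, ← S.exists_leftInverse_iff_antilipschitz]
  refine exists_congr fun K => ?_
  simp_rw [← map_smul_of_tower K]
  exact (forall_hasSum_map_iff_leftInverse hS K).symm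

/-- S_{ΓΛ} is bounded below iff there exists K ∈ B(H) such that
{v_j w_j K P_{V_j} Γ_j* Λ_j P_{W_j}} is a resolution of the identity. -/
theorem stmt10
    {ι E : Type*} [NormedAddCommGroup E] [InnerProductSpace ℂ E] [CompleteSpace E]
    {G : ι → Type*} [∀ j, NormedAddCommGroup (G j)] [∀ j, InnerProductSpace ℂ (G j)]
    [∀ j, CompleteSpace (G j)]
    (W V' : ι → Submodule ℂ E) [∀ j, CompleteSpace (W j)] [∀ j, CompleteSpace (V' j)]
    (w v : ι → ℝ) (hw : ∀ j, 0 < w j) (hv : ∀ j, 0 < v j)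
    (Λ Γ : ∀ j, E →L[ℂ] G j)
    (D₁ D₂ : ℝ)
    (hΛ : ∀ f : E, Summable (fun j => (w j) ^ 2 * ‖Λ j (proj (W j) f)‖ ^ 2) ∧
      ∑' j, (w j) ^ 2 * ‖Λ j (proj (W j) f)‖ ^ 2 ≤ D₁ * ‖f‖ ^ 2)
    (hΓ : ∀ f : E, Summable (fun j => (v j) ^ 2 * ‖Γ j (proj (V' j) f)‖ ^ 2) ∧
      ∑' j, (v j) ^ 2 * ‖Γ j (proj (V' j) f)‖ ^ 2 ≤ D₂ * ‖f‖ ^ 2)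
    (S : E →L[ℂ] E)
    (hS : ∀ f : E, HasSum
      (fun j => (v j * w j) • proj (V' j)
        (ContinuousLinearMap.adjoint (Γ j) (Λ j (proj (W j) f)))) (S f)) :
    (∃ M > (0 : ℝ), ∀ f : E, M * ‖f‖ ≤ ‖S f‖) ↔
    ∃ K : E →L[ℂ] E, ∀ f : E, HasSum
      (fun j => (v j * w j) • K (proj (V' j)
        (ContinuousLinearMap.adjoint (Γ j) (Λ j (proj (W j) f))))) f :=
  stmt10_general W V' w v Λ Γ S hS
end

section
/- Let Λ⊕Γ = {(W_j ⊕ V_j, Λ_j ⊕ Γ_j, v_j)}_{j∈J} be a g-fusion frame for H ⊕ X with frame operator S = S_{Λ⊕Γ}. Then {(S^{-1/2}(W_j ⊕ V_j), (Λ_j ⊕ Γ_j) P_{W_j⊕V_j} S^{-1/2}, v_j)}_{j∈J} is a Parseval g-fusion frame for H ⊕ X, i.e., Σ_j v_j² ‖(Λ_j⊕Γ_j) P_{W_j⊕V_j} S^{-1/2} P_{S^{-1/2}(W_j⊕V_j)}(f,g)‖² = ‖(f,g)‖² for all (f,g). -/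
open ContinuousLinearMap

noncomputable def projOp {E : Type*} [NormedAddCommGroup E] [InnerProductSpace ℂ E]
    [CompleteSpace E] (W : Submodule ℂ E) : E →L[ℂ] E :=
  haveI : CompleteSpace W.topologicalClosure := W.isClosed_topologicalClosure.completeSpace_coe
  W.topologicalClosure.subtypeL.comp (W.topologicalClosure.orthogonalProjectionOnto)

/-- The operator U ⊕ V acting between ℓ²-direct sums of two Hilbert spaces. -/
noncomputable def oplus {E F E' F' : Type*} [NormedAddCommGroup E] [NormedSpace ℂ E]
    [NormedAddCommGroup F] [NormedSpace ℂ F] [NormedAddCommGroup E'] [NormedSpace ℂ E']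
    [NormedAddCommGroup F'] [NormedSpace ℂ F']
    (A : E →L[ℂ] E') (B : F →L[ℂ] F') : WithLp 2 (E × F) →L[ℂ] WithLp 2 (E' × F') :=
  ((WithLp.prodContinuousLinearEquiv 2 ℂ E' F').symm.toContinuousLinearMap).comp
    ((A.prodMap B).comp (WithLp.prodContinuousLinearEquiv 2 ℂ E F).toContinuousLinearMap)

/-- The subspace W ⊕ V of the ℓ²-direct sum. -/
noncomputable def prodSub {E F : Type*} [NormedAddCommGroup E] [NormedSpace ℂ E]
    [NormedAddCommGroup F] [NormedSpace ℂ F] (W : Submodule ℂ E) (V : Submodule ℂ F) :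
    Submodule ℂ (WithLp 2 (E × F)) :=
  (W.prod V).map (WithLp.prodContinuousLinearEquiv 2 ℂ E F).symm.toContinuousLinearMap.toLinearMap

/-
Let `R = S^{-1/2}`. Since `P_{W_j ⊕ V_j}` is self-adjoint, pairing the series defining the frame
operator with `x` gives `⟪x, S x⟫ = Σ_j v_j² ‖(Λ_j ⊕ Γ_j) P_{W_j ⊕ V_j} x‖²`. Take `x = R u`: as `R`
is self-adjoint and commutes with `S`, `⟪R u, S R u⟫ = ⟪u, S R² u⟫ = ‖u‖²`. Finally, the projection
onto `cl(R(W_j ⊕ V_j))` may be dropped, because `P_W T* = P_W T* P_{cl(TW)}` for `T = R = R*`.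
-/

open InnerProductSpace

section DirectSum

variable {E F : Type*} [NormedAddCommGroup E] [InnerProductSpace ℂ E]
  [NormedAddCommGroup F] [InnerProductSpace ℂ F]

theorem isSelfAdjoint_oplus_proj [CompleteSpace E] [CompleteSpace F]
    (W : Submodule ℂ E) (V : Submodule ℂ F) [CompleteSpace W] [CompleteSpace V] :
    IsSelfAdjoint (oplus (proj W) (proj V)) :=
  LinearMap.IsSymmetric.isSelfAdjoint fun x y => by
    simp only [coe_coe, WithLp.prod_inner_apply]
    exact congrArg₂ (· + ·) (Submodule.inner_starProjection_left_eq_right W x.fst y.fst)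
      (Submodule.inner_starProjection_left_eq_right V x.snd y.snd)

theorem oplus_proj_eq_zero_of_mem_orthogonal (W : Submodule ℂ E) (V : Submodule ℂ F)
    [CompleteSpace W] [CompleteSpace V] {x : WithLp 2 (E × F)} (hx : x ∈ (prodSub W V)ᗮ) :
    oplus (proj W) (proj V) x = 0 := by
  have hfst : x.fst ∈ Wᗮ := fun w hw => by
    simpa [WithLp.prod_inner_apply] using
      hx _ (Submodule.mem_map_of_mem (f := _) (⟨hw, V.zero_mem⟩ : ((w, 0) : E × F) ∈ W.prod V))
  have hsnd : x.snd ∈ Vᗮ := fun w hw => by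
    simpa [WithLp.prod_inner_apply] using
      hx _ (Submodule.mem_map_of_mem (f := _) (⟨W.zero_mem, hw⟩ : ((0, w) : E × F) ∈ W.prod V))
  refine (WithLp.ext_iff 2).2 (Prod.ext ?_ ?_)
  · change (W.orthogonalProjectionOnto x.fst : E) = 0
    rw [Submodule.orthogonalProjectionOnto_apply_of_mem_orthogonal hfst, ZeroMemClass.coe_zero]
  · change (V.orthogonalProjectionOnto x.snd : F) = 0
    rw [Submodule.orthogonalProjectionOnto_apply_of_mem_orthogonal hsnd, ZeroMemClass.coe_zero]

theorem oplus_proj_adjoint_projOp_map [CompleteSpace E] [CompleteSpace F]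
    {H : Type*} [NormedAddCommGroup H] [InnerProductSpace ℂ H] [CompleteSpace H]
    (W : Submodule ℂ E) (V : Submodule ℂ F) [CompleteSpace W] [CompleteSpace V]
    (T : WithLp 2 (E × F) →L[ℂ] H) (u : H) :
    oplus (proj W) (proj V) (adjoint T (projOp ((prodSub W V).map T.toLinearMap) u))
      = oplus (proj W) (proj V) (adjoint T u) := by
  set K := (prodSub W V).map T.toLinearMap
  have : CompleteSpace K.topologicalClosure := K.isClosed_topologicalClosure.completeSpace_coe
  have hperp : u - projOp K u ∈ K.topologicalClosureᗮ :=
    Submodule.sub_starProjection_mem_orthogonal (K := K.topologicalClosure) u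
  have hzero : oplus (proj W) (proj V) (adjoint T (u - projOp K u)) = 0 := by
    refine oplus_proj_eq_zero_of_mem_orthogonal W V fun w hw => ?_
    rw [adjoint_inner_right]
    exact Submodule.inner_right_of_mem_orthogonal
      (K.le_topologicalClosure (Submodule.mem_map_of_mem hw)) hperp
  rwa [map_sub, map_sub, sub_eq_zero, eq_comm] at hzero

end DirectSum

theorem hasSum_norm_sq_of_hasSum_frameOperator {ι E : Type*} [NormedAddCommGroup E]
    [InnerProductSpace ℂ E] [CompleteSpace E] {G : ι → Type*} [∀ j, NormedAddCommGroup (G j)]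
    [∀ j, InnerProductSpace ℂ (G j)] [∀ j, CompleteSpace (G j)]
    (P : ι → E →L[ℂ] E) (hP : ∀ j, IsSelfAdjoint (P j)) (T : ∀ j, E →L[ℂ] G j) (v : ι → ℝ)
    {x y : E} (hy : HasSum (fun j => v j ^ 2 • P j (adjoint (T j) (T j (P j x)))) y) :
    HasSum (fun j => v j ^ 2 * ‖T j (P j x)‖ ^ 2) (inner ℂ x y).re := by
  have hterm : ∀ j, inner ℂ x (v j ^ 2 • P j (adjoint (T j) (T j (P j x))))
      = ((v j ^ 2 * ‖T j (P j x)‖ ^ 2 : ℝ) : ℂ) := fun j => by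
    have hsymm : ∀ z, inner ℂ (P j x) z = inner ℂ x (P j z) := (hP j).isSymmetric x
    rw [RCLike.real_smul_eq_coe_smul (K := ℂ), inner_smul_right, ← hsymm,
      adjoint_inner_right, inner_self_eq_norm_sq_to_K]
    push_cast
    rfl
  simpa only [innerSL_apply_apply, hterm, Complex.reCLM_apply, Complex.ofReal_re] using
    Complex.reCLM.hasSum ((innerSL ℂ x).hasSum hy)

section SquareRoot

variable {E : Type*} [NormedAddCommGroup E] [InnerProductSpace ℂ E]
  {S R : E ≃L[ℂ] E}

theorem apply_comm_of_apply_apply_eq_symm (hRR : ∀ u, R (R u) = S.symm u) (z : E) :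
    R (S z) = S (R z) :=
  S.symm.injective <| by
    rw [← hRR, hRR (S z), S.symm_apply_apply, S.symm_apply_apply]

theorem inner_apply_apply_eq_norm_sq_of_apply_apply_eq_symm [CompleteSpace E]
    (hR : IsSelfAdjoint R.toContinuousLinearMap) (hRR : ∀ u, R (R u) = S.symm u) (u : E) :
    inner ℂ (R u) (S (R u)) = ((‖u‖ ^ 2 : ℝ) : ℂ) := by
  calc inner ℂ (R u) (S (R u)) = inner ℂ u (R (S (R u))) := hR.isSymmetric u (S (R u))
    _ = inner ℂ u u := by rw [apply_comm_of_apply_apply_eq_symm hRR, hRR, S.apply_symm_apply]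
    _ = _ := by rw [inner_self_eq_norm_sq_to_K]; norm_cast

end SquareRoot

theorem stmt16_general {ι E F : Type*} [NormedAddCommGroup E] [InnerProductSpace ℂ E] [CompleteSpace E]
    [NormedAddCommGroup F] [InnerProductSpace ℂ F] [CompleteSpace F]
    {G X : ι → Type*} [∀ j, NormedAddCommGroup (G j)] [∀ j, InnerProductSpace ℂ (G j)]
    [∀ j, CompleteSpace (G j)] [∀ j, NormedAddCommGroup (X j)] [∀ j, InnerProductSpace ℂ (X j)]
    [∀ j, CompleteSpace (X j)]
    (W : ι → Submodule ℂ E) [∀ j, CompleteSpace (W j)]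
    (Vs : ι → Submodule ℂ F) [∀ j, CompleteSpace (Vs j)]
    (v : ι → ℝ)
    (Λ : ∀ j, E →L[ℂ] G j) (Γ : ∀ j, F →L[ℂ] X j)
    (S : WithLp 2 (E × F) ≃L[ℂ] WithLp 2 (E × F))
    (hS : ∀ u : WithLp 2 (E × F), HasSum
      (fun j => (v j) ^ 2 • oplus (proj (W j)) (proj (Vs j))
        (ContinuousLinearMap.adjoint (oplus (Λ j) (Γ j))
          (oplus (Λ j) (Γ j) (oplus (proj (W j)) (proj (Vs j)) u)))) (S u))
    (R : WithLp 2 (E × F) ≃L[ℂ] WithLp 2 (E × F))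
    (hRpos : ContinuousLinearMap.IsPositive R.toContinuousLinearMap)
    (hRR : ∀ u, R (R u) = S.symm u) :
    ∀ u : WithLp 2 (E × F),
      Summable (fun j => (v j) ^ 2 *
        ‖oplus (Λ j) (Γ j) (oplus (proj (W j)) (proj (Vs j))
          (R (projOp ((prodSub (W j) (Vs j)).map R.toContinuousLinearMap.toLinearMap) u)))‖ ^ 2) ∧
      ∑' j, (v j) ^ 2 *
        ‖oplus (Λ j) (Γ j) (oplus (proj (W j)) (proj (Vs j))
          (R (projOp ((prodSub (W j) (Vs j)).map R.toContinuousLinearMap.toLinearMap) u)))‖ ^ 2 =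
        ‖u‖ ^ 2 := by
  intro u
  have hR : IsSelfAdjoint R.toContinuousLinearMap := hRpos.isSelfAdjoint
  have hdrop : ∀ j, oplus (proj (W j)) (proj (Vs j))
      (R (projOp ((prodSub (W j) (Vs j)).map R.toContinuousLinearMap.toLinearMap) u)) =
      oplus (proj (W j)) (proj (Vs j)) (R u) := fun j => by
    simpa only [hR.adjoint_eq, ContinuousLinearEquiv.coe_coe] using
      oplus_proj_adjoint_projOp_map (W j) (Vs j) R.toContinuousLinearMap u
  have hsum := hasSum_norm_sq_of_hasSum_frameOperator _ (fun j => isSelfAdjoint_oplus_proj _ _)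
    (fun j => oplus (Λ j) (Γ j)) v (hS (R u))
  rw [inner_apply_apply_eq_norm_sq_of_apply_apply_eq_symm hR hRR, Complex.ofReal_re] at hsum
  simp only [hdrop]
  exact ⟨hsum.summable, hsum.tsum_eq⟩

/-- the canonical S^{-1/2}-transform of a g-fusion frame Λ⊕Γ for H ⊕ X is a
Parseval g-fusion frame, where R = S^{-1/2} is the positive square root of S⁻¹. -/
theorem stmt16 {ι E F : Type*} [NormedAddCommGroup E] [InnerProductSpace ℂ E] [CompleteSpace E]
    [NormedAddCommGroup F] [InnerProductSpace ℂ F] [CompleteSpace F]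
    {G X : ι → Type*} [∀ j, NormedAddCommGroup (G j)] [∀ j, InnerProductSpace ℂ (G j)]
    [∀ j, CompleteSpace (G j)] [∀ j, NormedAddCommGroup (X j)] [∀ j, InnerProductSpace ℂ (X j)]
    [∀ j, CompleteSpace (X j)]
    (W : ι → Submodule ℂ E) [∀ j, CompleteSpace (W j)]
    (Vs : ι → Submodule ℂ F) [∀ j, CompleteSpace (Vs j)]
    (v : ι → ℝ) (hv : ∀ j, 0 < v j)
    (Λ : ∀ j, E →L[ℂ] G j) (Γ : ∀ j, F →L[ℂ] X j)
    (A₁ B₁ : ℝ) (hA₁ : 0 < A₁) (hAB : A₁ ≤ B₁)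
    (hframe : ∀ u : WithLp 2 (E × F),
      Summable (fun j => (v j) ^ 2 *
        ‖oplus (Λ j) (Γ j) (oplus (proj (W j)) (proj (Vs j)) u)‖ ^ 2) ∧
      A₁ * ‖u‖ ^ 2 ≤
        ∑' j, (v j) ^ 2 * ‖oplus (Λ j) (Γ j) (oplus (proj (W j)) (proj (Vs j)) u)‖ ^ 2 ∧
      ∑' j, (v j) ^ 2 * ‖oplus (Λ j) (Γ j) (oplus (proj (W j)) (proj (Vs j)) u)‖ ^ 2 ≤
        B₁ * ‖u‖ ^ 2)
    (S : WithLp 2 (E × F) ≃L[ℂ] WithLp 2 (E × F))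
    (hS : ∀ u : WithLp 2 (E × F), HasSum
      (fun j => (v j) ^ 2 • oplus (proj (W j)) (proj (Vs j))
        (ContinuousLinearMap.adjoint (oplus (Λ j) (Γ j))
          (oplus (Λ j) (Γ j) (oplus (proj (W j)) (proj (Vs j)) u)))) (S u))
    (R : WithLp 2 (E × F) ≃L[ℂ] WithLp 2 (E × F))
    (hRpos : ContinuousLinearMap.IsPositive R.toContinuousLinearMap)
    (hRR : ∀ u, R (R u) = S.symm u) :
    ∀ u : WithLp 2 (E × F),
      Summable (fun j => (v j) ^ 2 *
        ‖oplus (Λ j) (Γ j) (oplus (proj (W j)) (proj (Vs j))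
          (R (projOp ((prodSub (W j) (Vs j)).map R.toContinuousLinearMap.toLinearMap) u)))‖ ^ 2) ∧
      ∑' j, (v j) ^ 2 *
        ‖oplus (Λ j) (Γ j) (oplus (proj (W j)) (proj (Vs j))
          (R (projOp ((prodSub (W j) (Vs j)).map R.toContinuousLinearMap.toLinearMap) u)))‖ ^ 2 =
        ‖u‖ ^ 2 :=
  stmt16_general W Vs v Λ Γ S hS R hRpos hRR
end
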